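/- Let f be a piecewise contracting interval map on X satisfying the separation property and D ⊂ X̃. Then the lower box dimension of the attractor Λ of f is equal to zero, i.e. liminf_{ε→0⁺} (log ℓ(Λ,ε))/(log(1/ε)) = 0, where ℓ(Λ,ε) denotes the smallest number of intervals of diameter at most ε needed to cover Λ. -/

import Mathlib

open Set Filter Metric Topology

/-- A piecewise contracting interval map (PCIM) on the compact interval `X = [a,b]`:
there are `N ≥ 1` pairwise disjoint nonempty open (relative to `X`) subintervals
whose closures cover `X`, and `f` contracts with rate `lam ∈ (0,1)` on each piece. -/
structure PCIM where
  a : ℝ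
  b : ℝ
  hab : a < b
  N : ℕ
  hN : 1 ≤ N
  f : ℝ → ℝ
  lam : ℝ
  hlam₀ : 0 < lam
  hlam₁ : lam < 1
  piece : Fin N → Set ℝ
  piece_nonempty : ∀ i, (piece i).Nonempty
  piece_interval : ∀ i, ∃ c d : ℝ, piece i = Set.Ioo c d ∩ Set.Icc a b
  piece_disjoint : ∀ i j, i ≠ j → Disjoint (piece i) (piece j)
  cover : Set.Icc a b = ⋃ i, closure (piece i)
  mapsTo : Set.MapsTo f (Set.Icc a b) (Set.Icc a b)
  contract : ∀ i, ∀ x ∈ piece i, ∀ y ∈ piece i, |f x - f y| ≤ lam * |x - y|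

namespace PCIM

variable (P : PCIM)

/-- The underlying compact interval `X`. -/
def X : Set ℝ := Set.Icc P.a P.b

/-- `X* = ⋃ i, X_i`, the union of the contraction pieces. -/
def Xstar : Set ℝ := ⋃ i, P.piece i

/-- `Δ = X \ X*`, the set of boundaries of the contraction pieces. -/
def Delta : Set ℝ := P.X \ P.Xstar

/-- `X̃ = ⋂_{j ≥ 0} f⁻ʲ(X*)`, the points all of whose iterates are well defined. -/
def Xtilde : Set ℝ := ⋂ j : ℕ, (P.f^[j]) ⁻¹' P.Xstar

/-- `D`: the set of one-sided limits of `f` at the points of `Δ`. -/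
def D : Set ℝ :=
  {L | ∃ c ∈ P.Delta,
    ((𝓝[P.X ∩ Set.Iio c] c).NeBot ∧ Filter.Tendsto P.f (𝓝[P.X ∩ Set.Iio c] c) (𝓝 L)) ∨
    ((𝓝[P.X ∩ Set.Ioi c] c).NeBot ∧ Filter.Tendsto P.f (𝓝[P.X ∩ Set.Ioi c] c) (𝓝 L))}

/-- A set `A` is `f`-pseudo-invariant if for every `x ∈ A` at least one of the
one-sided limits of `f` at `x` belongs to `A`. -/
def PseudoInvariant (A : Set ℝ) : Prop :=
  ∀ x ∈ A,
    (∃ L ∈ A, (𝓝[P.X ∩ Set.Iio x] x).NeBot ∧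
      Filter.Tendsto P.f (𝓝[P.X ∩ Set.Iio x] x) (𝓝 L)) ∨
    (∃ L ∈ A, (𝓝[P.X ∩ Set.Ioi x] x).NeBot ∧
      Filter.Tendsto P.f (𝓝[P.X ∩ Set.Ioi x] x) (𝓝 L))

/-- `f` is piecewise monotonic: strictly monotone on each contraction piece. -/
def PiecewiseMonotonic : Prop :=
  ∀ i, StrictMonoOn P.f (P.piece i) ∨ StrictAntiOn P.f (P.piece i)

/-- `f` satisfies the separation property: it is piecewise monotonic and the closures
of the images of distinct pieces are disjoint. -/
def SeparationProperty : Prop :=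
  P.PiecewiseMonotonic ∧
    ∀ i j, i ≠ j → closure (P.f '' P.piece i) ∩ closure (P.f '' P.piece j) = ∅

/-- The iterates `Λ_n` defining the attractor: `Λ_0 = X`,
`Λ_{n+1} = cl (f (Λ_n \ Δ))`. -/
def LambdaIter : (P : PCIM) → ℕ → Set ℝ
  | Q, 0 => Q.X
  | Q, n + 1 => closure (Q.f '' (LambdaIter Q n \ Q.Delta))

/-- The attractor `Λ = ⋂_{n ≥ 1} Λ_n`. -/
def Lambda : Set ℝ := ⋂ n : ℕ, P.LambdaIter (n + 1)

/-- The atom associated to the word `w = [i₁, …, iₙ]`: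
`A_{i₁…iₙ} = F_{iₙ} ∘ ⋯ ∘ F_{i₁}(X)` where `F_i(A) = cl (f (A ∩ X_i))`. -/
def atomOf (w : List (Fin P.N)) : Set ℝ :=
  w.foldl (fun A i => closure (P.f '' (A ∩ P.piece i))) P.X

/-- `𝒜_n`: the set of (nonempty) atoms of generation `n`. -/
def atoms (n : ℕ) : Set (Set ℝ) :=
  {A | ∃ w : List (Fin P.N), w.length = n ∧ P.atomOf w = A ∧ A.Nonempty}

/-- `θ` is the itinerary of `x`: `f^t(x) ∈ X_{θ_t}` for all `t`. -/
def IsItinerary (x : ℝ) (θ : ℕ → Fin P.N) : Prop :=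
  ∀ t : ℕ, P.f^[t] x ∈ P.piece (θ t)

/-- The word `θ_t θ_{t+1} … θ_{t+n-1}` of length `n` of the sequence `θ`. -/
def word (θ : ℕ → Fin P.N) (t n : ℕ) : List (Fin P.N) :=
  (List.range n).map fun k => θ (t + k)

/-- `L_n(θ)`: the set of words of length `n` occurring in `θ`. -/
def lang (θ : ℕ → Fin P.N) (n : ℕ) : Set (List (Fin P.N)) :=
  {w | ∃ t : ℕ, w = P.word θ t n}

/-- The complexity function `p_θ(n) = #L_n(θ)`. -/
noncomputable def complexity (θ : ℕ → Fin P.N) (n : ℕ) : ℕ := (P.lang θ n).ncard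

/-- The forward orbit of `x` under `f`. -/
def orbit (x : ℝ) : Set ℝ := {y | ∃ k : ℕ, P.f^[k] x = y}

/-- The ω-limit set of `x` under `f`. -/
def omegaLimitSet (x : ℝ) : Set ℝ :=
  ⋂ n : ℕ, closure {y | ∃ m : ℕ, n ≤ m ∧ P.f^[m] x = y}

/-- A compact pseudo-invariant set `A` is `X̃`-minimal if the orbit of every point
of `A ∩ X̃` is dense in `A`. -/
def XtildeMinimal (A : Set ℝ) : Prop :=
  IsCompact A ∧ P.PseudoInvariant A ∧ ∀ x ∈ A ∩ P.Xtilde, A ⊆ closure (P.orbit x)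

/-- A periodic orbit contained in `X̃`. -/
def IsPeriodicOrbit (A : Set ℝ) : Prop :=
  ∃ x ∈ P.Xtilde, ∃ p : ℕ, 1 ≤ p ∧ P.f^[p] x = x ∧ A = P.orbit x

end PCIM

/-- A Cantor set: nonempty, compact, perfect and totally disconnected. -/
def IsCantorSet (A : Set ℝ) : Prop :=
  A.Nonempty ∧ IsCompact A ∧ Perfect A ∧ IsTotallyDisconnected A


/-- `ℓ(E, ε)`: the smallest number of intervals of diameter at most `ε`
needed to cover `E`. -/
noncomputable def coveringNumber (E : Set ℝ) (ε : ℝ) : ℕ :=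
  sInf {k : ℕ | ∃ c : Fin k → Set ℝ,
    (∀ i, (c i).OrdConnected ∧ Metric.diam (c i) ≤ ε) ∧ E ⊆ ⋃ i, c i}

/-!
Code the dynamics by atoms: the atom of a word `i₁ ⋯ iₙ` is `F_{iₙ} ∘ ⋯ ∘ F_{i₁}(X)`, an
interval of length at most `λⁿ |X|`, and `Λ ⊆ Λₙ` is covered by the nonempty atoms of
generation `n`. Under the separation property, `f` is injective on each piece and distinct
pieces have images with disjoint closures, so atoms of one generation have pairwise disjoint
interiors. An atom has more than one child only if it meets two pieces, and then a point of the
finite set `Δ` lies in its interior; by disjointness at most `#Δ` atoms of each generation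
branch. Hence the number of atoms grows linearly, `ℓ(Λ, λⁿ |X|) ≤ 1 + n #Δ N`, which is
subexponential in `n`.
-/

namespace Set.OrdConnected

variable {s : Set ℝ}

theorem interior_eq_empty_iff (hs : s.OrdConnected) : interior s = ∅ ↔ s.Subsingleton := by
  rw [← not_nontrivial_iff, hs.convex.nontrivial_iff_nonempty_interior,
    not_nonempty_iff_eq_empty]

theorem interior_closure (hs : s.OrdConnected) : interior (closure s) = interior s := by
  rcases (interior s).eq_empty_or_nonempty with h | h
  · rw [h, (hs.convex (𝕜 := ℝ)).closure.ordConnected.interior_eq_empty_iff]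
    exact (hs.interior_eq_empty_iff.1 h).closure
  · exact (hs.convex (𝕜 := ℝ)).interior_closure_eq_interior_of_nonempty_interior h

theorem image_of_continuousOn (hs : s.OrdConnected) {f : ℝ → ℝ} (hf : ContinuousOn f s) :
    (f '' s).OrdConnected :=
  isPreconnected_iff_ordConnected.1 <| (isPreconnected_iff_ordConnected.2 hs).image f hf

end Set.OrdConnected

theorem Set.OrdConnected.closure {s : Set ℝ} (hs : s.OrdConnected) : (closure s).OrdConnected :=
  (hs.convex (𝕜 := ℝ)).closure.ordConnected

theorem disjoint_interior_closure_image {f : ℝ → ℝ} {s S T : Set ℝ} (hinj : InjOn f s)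
    (hf : ContinuousOn f s) (hS : S.OrdConnected) (hT : T.OrdConnected) (hSs : S ⊆ s)
    (hTs : T ⊆ s) (h : Disjoint (interior S) (interior T)) :
    Disjoint (interior (closure (f '' S))) (interior (closure (f '' T))) := by
  have hST : (S ∩ T).OrdConnected := hS.inter hT
  have himage : (f '' (S ∩ T)).OrdConnected :=
    hST.image_of_continuousOn (hf.mono (inter_subset_left.trans hSs))
  rw [(hS.image_of_continuousOn (hf.mono hSs)).interior_closure,
    (hT.image_of_continuousOn (hf.mono hTs)).interior_closure, disjoint_iff_inter_eq_empty,
    ← interior_inter, ← hinj.image_inter hSs hTs, himage.interior_eq_empty_iff]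
  rw [disjoint_iff_inter_eq_empty, ← interior_inter, hST.interior_eq_empty_iff] at h
  exact h.image f

theorem coveringNumber_le_ncard {ι : Type*} {E : Set ℝ} {ε : ℝ} {s : Set ι} (hs : s.Finite)
    (c : ι → Set ℝ) (hc : ∀ i ∈ s, (c i).OrdConnected ∧ diam (c i) ≤ ε)
    (hE : E ⊆ ⋃ i ∈ s, c i) : coveringNumber E ε ≤ s.ncard := by
  have := hs.to_subtype
  let e := Finite.equivFin s
  rw [← Nat.card_coe_set_eq]
  refine Nat.sInf_le ⟨fun k => c (e.symm k), fun k => hc _ (e.symm k).2, fun x hx => ?_⟩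
  obtain ⟨i, hi, hxi⟩ := mem_iUnion₂.1 (hE hx)
  exact mem_iUnion.2 ⟨e ⟨i, hi⟩, by rwa [e.symm_apply_apply]⟩

theorem Filter.liminf_eq_zero_of_nonneg_of_tendsto_comp {α β : Type*} {l : Filter α}
    {l' : Filter β} [l'.NeBot] {g : α → ℝ} {u : β → α} (hg : ∀ᶠ x in l, 0 ≤ g x)
    (hu : Tendsto u l' l) (hgu : Tendsto (g ∘ u) l' (𝓝 0)) : liminf g l = 0 := by
  have hfreq : ∀ c > 0, ∃ᶠ x in l, g x ≤ c := fun c hc =>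
    hu.frequently (hgu.eventually (eventually_le_nhds hc)).frequently
  refine le_antisymm (le_of_forall_gt_imp_ge_of_dense fun c hc => ?_) ?_
  · exact liminf_le_of_frequently_le (hfreq c hc) ⟨0, eventually_map.2 hg⟩
  · exact le_liminf_of_le (IsCoboundedUnder.of_frequently_le (hfreq 1 one_pos)) hg

theorem tendsto_log_mul_succ_div_mul_add {K L : ℝ} (hK : 0 < K) (hL : 0 < L) (c : ℝ) :
    Tendsto (fun n : ℕ => Real.log (K * (n + 1)) / (L * n + c)) atTop (𝓝 0) := by
  have hx : Tendsto (fun n : ℕ => K * ((n : ℝ) + 1)) atTop atTop :=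
    (tendsto_atTop_add_const_right _ 1 tendsto_natCast_atTop_atTop).const_mul_atTop hK
  refine ((Real.tendsto_pow_log_div_mul_add_atTop (L / K) (c - L) 1
    (div_pos hL hK).ne').comp hx).congr fun n => ?_
  simp only [Function.comp_apply, pow_one]
  congr 1
  field_simp
  ring

theorem liminf_log_div_log_inv_eq_zero {ℓ : ℝ → ℕ} {r d K : ℝ} (hr₀ : 0 < r) (hr₁ : r < 1)
    (hd : 0 < d) (hK : 1 ≤ K) (hℓ : ∀ n : ℕ, (ℓ (r ^ n * d) : ℝ) ≤ K * (n + 1)) :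
    liminf (fun ε => Real.log (ℓ ε) / Real.log (1 / ε)) (𝓝[>] 0) = 0 := by
  set L := -Real.log r
  have hL : 0 < L := neg_pos.2 (Real.log_neg hr₀ hr₁)
  have hlog : ∀ n : ℕ, Real.log (1 / (r ^ n * d)) = L * n + -Real.log d := by
    intro n
    rw [one_div, Real.log_inv, Real.log_mul (pow_pos hr₀ n).ne' hd.ne', Real.log_pow]
    ring
  have hden : ∀ᶠ n : ℕ in atTop, 0 < L * n + -Real.log d :=
    (tendsto_atTop_add_const_right _ _
      (tendsto_natCast_atTop_atTop.const_mul_atTop hL)).eventually_gt_atTop 0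
  have hscale : Tendsto (fun n : ℕ => r ^ n * d) atTop (𝓝[>] 0) := by
    refine tendsto_nhdsWithin_iff.2 ⟨?_, .of_forall fun n => mul_pos (pow_pos hr₀ n) hd⟩
    simpa using (tendsto_pow_atTop_nhds_zero_of_lt_one hr₀.le hr₁).mul_const d
  refine liminf_eq_zero_of_nonneg_of_tendsto_comp ?_ hscale ?_
  · filter_upwards [Ioo_mem_nhdsGT one_pos] with ε hε
    exact div_nonneg (Real.log_natCast_nonneg _)
      (Real.log_nonneg (one_le_one_div hε.1 hε.2.le))
  refine tendsto_of_tendsto_of_tendsto_of_le_of_le' tendsto_const_nhds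
    (tendsto_log_mul_succ_div_mul_add (one_pos.trans_le hK) hL (-Real.log d)) ?_ ?_ <;>
    filter_upwards [hden] with n hn <;> simp only [Function.comp_apply, hlog]
  · exact div_nonneg (Real.log_natCast_nonneg _) hn.le
  · refine div_le_div_of_nonneg_right ?_ hn.le
    rcases Nat.eq_zero_or_pos (ℓ (r ^ n * d)) with h | h
    · rw [h, Nat.cast_zero, Real.log_zero]
      exact Real.log_nonneg (one_le_mul_of_one_le_of_one_le hK (by simp))
    · exact Real.log_le_log (Nat.cast_pos.2 h) (hℓ n)

namespace PCIM

variable (P : PCIM)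

theorem piece_subset_X (i : Fin P.N) : P.piece i ⊆ P.X := by
  obtain ⟨c, d, h⟩ := P.piece_interval i
  exact h ▸ inter_subset_right

theorem ordConnected_piece (i : Fin P.N) : (P.piece i).OrdConnected := by
  obtain ⟨c, d, h⟩ := P.piece_interval i
  exact h ▸ ordConnected_Ioo.inter ordConnected_Icc

theorem Xstar_subset_X : P.Xstar ⊆ P.X := iUnion_subset P.piece_subset_X

theorem lipschitzOnWith_piece (i : Fin P.N) :
    LipschitzOnWith (Real.toNNReal P.lam) P.f (P.piece i) := by
  refine LipschitzOnWith.of_dist_le_mul fun x hx y hy => ?_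
  rw [Real.dist_eq, Real.dist_eq, Real.coe_toNNReal _ P.hlam₀.le]
  exact P.contract i x hx y hy

theorem continuousOn_piece (i : Fin P.N) : ContinuousOn P.f (P.piece i) :=
  (P.lipschitzOnWith_piece i).continuousOn

theorem PiecewiseMonotonic.injOn {P : PCIM} (h : P.PiecewiseMonotonic) (i : Fin P.N) :
    InjOn P.f (P.piece i) :=
  (h i).elim StrictMonoOn.injOn StrictAntiOn.injOn

theorem Delta_finite : P.Delta.Finite := by
  choose c d hcd using P.piece_interval
  refine (finite_iUnion fun i => toFinite {c i, d i}).subset fun z hz => ?_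
  obtain ⟨_, ⟨i, rfl⟩, hzi⟩ := (P.cover ▸ hz.1 : z ∈ ⋃ i, closure (P.piece i))
  have hcl : z ∈ Icc (c i) (d i) := by
    refine closure_minimal (fun x hx => ?_) isClosed_Icc hzi
    rw [hcd i] at hx
    exact Ioo_subset_Icc_self hx.1
  have hnot : z ∉ Ioo (c i) (d i) := fun h => hz.2 (mem_iUnion.2 ⟨i, hcd i ▸ ⟨h, hz.1⟩⟩)
  rw [mem_Ioo, not_and_or, not_lt, not_lt] at hnot
  refine mem_iUnion.2 ⟨i, ?_⟩
  rcases hnot with h | h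
  · exact Or.inl (le_antisymm h hcl.1)
  · exact Or.inr (le_antisymm hcl.2 h)

/-- The pieces are relatively open in `X`, so the connected interval `[x, y]` cannot be
split among several of them. -/
theorem eq_of_Icc_subset_Xstar {x y : ℝ} {i j : Fin P.N} (hxy : x ≤ y)
    (hsub : Icc x y ⊆ P.Xstar) (hx : x ∈ P.piece i) (hy : y ∈ P.piece j) : i = j := by
  by_contra hij
  choose c d hcd using P.piece_interval
  have hcover : Icc x y ⊆ Ioo (c i) (d i) ∪ ⋃ k ∈ {k | k ≠ i}, Ioo (c k) (d k) := by
    intro z hz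
    obtain ⟨k, hk⟩ := mem_iUnion.1 (hsub hz)
    rw [hcd k] at hk
    by_cases hki : k = i
    · exact Or.inl (hki ▸ hk.1)
    · exact Or.inr (mem_biUnion hki hk.1)
  obtain ⟨z, hz, hzi, hzk⟩ := isPreconnected_Icc _ _ isOpen_Ioo
    (isOpen_biUnion fun _ _ => isOpen_Ioo) hcover
    ⟨x, left_mem_Icc.2 hxy, ((hcd i) ▸ hx).1⟩
    ⟨y, right_mem_Icc.2 hxy, mem_biUnion (Ne.symm hij) ((hcd j) ▸ hy).1⟩
  obtain ⟨k, hki, hzk⟩ := mem_iUnion₂.1 hzk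
  have hzX : z ∈ P.X := P.Xstar_subset_X (hsub hz)
  exact disjoint_left.1 (P.piece_disjoint k i hki) (by rw [hcd k]; exact ⟨hzk, hzX⟩)
    (by rw [hcd i]; exact ⟨hzi, hzX⟩)

theorem exists_mem_Delta_interior {A : Set ℝ} (hA : A.OrdConnected) (hAX : A ⊆ P.X)
    {i j : Fin P.N} (hij : i ≠ j) (hi : (A ∩ P.piece i).Nonempty)
    (hj : (A ∩ P.piece j).Nonempty) : ∃ c ∈ P.Delta, c ∈ interior A := by
  obtain ⟨x, hxA, hxi⟩ := hi
  obtain ⟨y, hyA, hyj⟩ := hj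
  wlog hxy : x < y generalizing x y i j
  · have hne : x ≠ y := fun h => (P.piece_disjoint i j hij).le_bot ⟨hxi, h ▸ hyj⟩
    exact this hij.symm y hyA hyj x hxA hxi (lt_of_le_of_ne (not_lt.1 hxy) hne.symm)
  obtain ⟨z, hz, hzX⟩ := not_subset.1 fun h => hij (P.eq_of_Icc_subset_Xstar hxy.le h hxi hyj)
  have hzx : z ≠ x := fun h => hzX (mem_iUnion.2 ⟨i, h ▸ hxi⟩)
  have hzy : z ≠ y := fun h => hzX (mem_iUnion.2 ⟨j, h ▸ hyj⟩)
  refine ⟨z, ⟨hAX (hA.out hxA hyA hz), hzX⟩, ?_⟩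
  exact isOpen_Ioo.subset_interior_iff.2 (Ioo_subset_Icc_self.trans (hA.out hxA hyA))
    ⟨lt_of_le_of_ne hz.1 hzx.symm, lt_of_le_of_ne hz.2 hzy⟩

theorem atomOf_append_singleton (u : List (Fin P.N)) (i : Fin P.N) :
    P.atomOf (u ++ [i]) = closure (P.f '' (P.atomOf u ∩ P.piece i)) :=
  List.foldl_concat ..

theorem atomOf_subset_X (w : List (Fin P.N)) : P.atomOf w ⊆ P.X := by
  induction w using List.reverseRecOn with
  | nil => exact subset_rfl
  | append_singleton u i ih =>
    rw [atomOf_append_singleton]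
    refine closure_minimal ?_ isClosed_Icc
    rintro _ ⟨x, hx, rfl⟩
    exact P.mapsTo (ih hx.1)

theorem isClosed_atomOf (w : List (Fin P.N)) : IsClosed (P.atomOf w) := by
  cases w using List.reverseRecOn with
  | nil => exact isClosed_Icc
  | append_singleton u i => exact P.atomOf_append_singleton u i ▸ isClosed_closure

theorem ordConnected_atomOf (w : List (Fin P.N)) : (P.atomOf w).OrdConnected := by
  induction w using List.reverseRecOn with
  | nil => exact ordConnected_Icc
  | append_singleton u i ih =>
    rw [atomOf_append_singleton]
    exact ((ih.inter (P.ordConnected_piece i)).image_of_continuousOn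
      ((P.continuousOn_piece i).mono inter_subset_right)).closure

theorem diam_atomOf_le (w : List (Fin P.N)) :
    diam (P.atomOf w) ≤ P.lam ^ w.length * (P.b - P.a) := by
  induction w using List.reverseRecOn with
  | nil => simp [atomOf, X, Real.diam_Icc P.hab.le]
  | append_singleton u i ih =>
    rw [atomOf_append_singleton, diam_closure, List.length_append, List.length_singleton,
      pow_succ, mul_comm _ P.lam, mul_assoc]
    have hbdd : Bornology.IsBounded (P.atomOf u) :=
      (isBounded_Icc P.a P.b).subset (P.atomOf_subset_X u)
    refine diam_le_of_forall_dist_le (by have := P.hlam₀; have := P.hab; positivity) ?_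
    rintro _ ⟨x, hx, rfl⟩ _ ⟨y, hy, rfl⟩
    calc dist (P.f x) (P.f y) ≤ P.lam * dist x y := by
          simpa only [Real.dist_eq] using P.contract i x hx.2 y hy.2
      _ ≤ P.lam * (P.lam ^ u.length * (P.b - P.a)) := by
          gcongr
          · exact P.hlam₀.le
          · exact (dist_le_diam_of_mem hbdd hx.1 hy.1).trans ih

theorem disjoint_interior_atomOf (hsep : P.SeparationProperty) {w w' : List (Fin P.N)}
    (hlen : w.length = w'.length) (hne : w ≠ w') :
    Disjoint (interior (P.atomOf w)) (interior (P.atomOf w')) := by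
  induction w using List.reverseRecOn generalizing w' with
  | nil => exact absurd (List.length_eq_zero_iff.1 hlen.symm).symm hne
  | append_singleton u i ih =>
    obtain rfl | ⟨u', i', rfl⟩ := w'.eq_nil_or_concat'
    · simp at hlen
    simp only [List.length_append, List.length_singleton, add_left_inj] at hlen
    rw [atomOf_append_singleton, atomOf_append_singleton]
    by_cases hii : i = i'
    · subst hii
      have hu : Disjoint (interior (P.atomOf u ∩ P.piece i))
          (interior (P.atomOf u' ∩ P.piece i)) :=
        (ih hlen fun h => hne (h ▸ rfl)).mono (interior_mono inter_subset_left)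
          (interior_mono inter_subset_left)
      exact disjoint_interior_closure_image (hsep.1.injOn i) (P.continuousOn_piece i)
        ((P.ordConnected_atomOf u).inter (P.ordConnected_piece i))
        ((P.ordConnected_atomOf u').inter (P.ordConnected_piece i)) inter_subset_right
        inter_subset_right hu
    · refine (disjoint_iff_inter_eq_empty.2 (hsep.2 i i' hii)).mono ?_ ?_ <;>
        exact interior_subset.trans (closure_mono (image_mono inter_subset_right))

def admissible (n : ℕ) : Set (List (Fin P.N)) :=
  {w | w.length = n ∧ (P.atomOf w).Nonempty}

def branching (n : ℕ) : Set (List (Fin P.N)) :=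
  {w | w.length = n ∧ ∃ i j, i ≠ j ∧ (P.atomOf w ∩ P.piece i).Nonempty ∧
    (P.atomOf w ∩ P.piece j).Nonempty}

theorem admissible_finite (n : ℕ) : (P.admissible n).Finite :=
  (List.finite_length_eq _ n).subset fun _ hw => hw.1

theorem branching_subset_admissible (n : ℕ) : P.branching n ⊆ P.admissible n :=
  fun _ ⟨hw, _, _, _, hi, _⟩ => ⟨hw, hi.mono inter_subset_left⟩

/-- Atoms of one generation have pairwise disjoint interiors, so distinct branching atoms
contain distinct points of `Δ`. -/
theorem ncard_branching_le (hsep : P.SeparationProperty) (n : ℕ) :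
    (P.branching n).ncard ≤ P.Delta.ncard := by
  have hδ : ∀ w ∈ P.branching n, ∃ c ∈ P.Delta, c ∈ interior (P.atomOf w) :=
    fun w ⟨_, _, _, hij, hi, hj⟩ =>
      P.exists_mem_Delta_interior (P.ordConnected_atomOf w) (P.atomOf_subset_X w) hij hi hj
  choose! δ hδΔ hδA using hδ
  refine ncard_le_ncard_of_injOn δ hδΔ (fun w hw w' hw' hww' => ?_) P.Delta_finite
  by_contra hne
  exact (P.disjoint_interior_atomOf hsep (hw.1.trans hw'.1.symm) hne).le_bot
    ⟨hδA w hw, hww' ▸ hδA w' hw'⟩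

theorem admissible_succ_subset (n : ℕ) :
    P.admissible (n + 1) ⊆ (fun p => p.1 ++ [p.2]) ''
      {p : List (Fin P.N) × Fin P.N | p.1 ∈ P.admissible n ∧
        (P.atomOf p.1 ∩ P.piece p.2).Nonempty} := by
  rintro w ⟨hlen, hne⟩
  obtain rfl | ⟨u, i, rfl⟩ := w.eq_nil_or_concat'
  · simp at hlen
  rw [atomOf_append_singleton, closure_nonempty_iff, image_nonempty] at hne
  simp only [List.length_append, List.length_singleton, add_left_inj] at hlen
  exact ⟨(u, i), ⟨⟨hlen, hne.mono inter_subset_left⟩, hne⟩, rfl⟩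

/-- Only branching atoms have more than one child. -/
theorem ncard_admissible_succ_le (hsep : P.SeparationProperty) (n : ℕ) :
    (P.admissible (n + 1)).ncard ≤ (P.admissible n).ncard + P.Delta.ncard * P.N := by
  set E := {p : List (Fin P.N) × Fin P.N | p.1 ∈ P.admissible n ∧
    (P.atomOf p.1 ∩ P.piece p.2).Nonempty}
  set E₁ := {p ∈ E | p.1 ∉ P.branching n}
  have hfin : (P.admissible n ×ˢ (univ : Set (Fin P.N))).Finite :=
    (P.admissible_finite n).prod finite_univ
  have hE : E ⊆ E₁ ∪ P.branching n ×ˢ univ := fun p hp => by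
    by_cases hb : p.1 ∈ P.branching n
    · exact Or.inr ⟨hb, mem_univ _⟩
    · exact Or.inl ⟨hp, hb⟩
  have hE₁ : E₁.ncard ≤ (P.admissible n).ncard := by
    refine ncard_le_ncard_of_injOn Prod.fst (fun p hp => hp.1.1)
      (fun p hp q hq hpq => Prod.ext hpq ?_) (P.admissible_finite n)
    by_contra hne
    exact hp.2 ⟨hp.1.1.1, p.2, q.2, hne, hp.1.2, hpq ▸ hq.1.2⟩
  have hEfin : E.Finite := hfin.subset fun p hp => ⟨hp.1, mem_univ _⟩
  calc (P.admissible (n + 1)).ncard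
      ≤ E.ncard := (ncard_le_ncard (P.admissible_succ_subset n) (hEfin.image _)).trans
        (ncard_image_le hEfin)
    _ ≤ E₁.ncard + (P.branching n ×ˢ (univ : Set (Fin P.N))).ncard :=
        (ncard_le_ncard hE ((hEfin.subset fun p hp => hp.1).union
          (hfin.subset (prod_mono (P.branching_subset_admissible n) subset_rfl)))).trans
          (ncard_union_le _ _)
    _ ≤ (P.admissible n).ncard + P.Delta.ncard * P.N := by
        rw [ncard_prod, ncard_univ, Nat.card_eq_fintype_card, Fintype.card_fin]
        exact add_le_add hE₁ (Nat.mul_le_mul_right _ (P.ncard_branching_le hsep n))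

theorem ncard_admissible_le (hsep : P.SeparationProperty) (n : ℕ) :
    (P.admissible n).ncard ≤ 1 + n * (P.Delta.ncard * P.N) := by
  induction n with
  | zero =>
    refine (ncard_le_ncard (t := {[]}) (fun w hw => List.length_eq_zero_iff.1 hw.1)
      (finite_singleton _)).trans ?_
    simp
  | succ n ih =>
    have := P.ncard_admissible_succ_le hsep n
    rw [Nat.succ_mul]
    omega

theorem LambdaIter_antitone : Antitone P.LambdaIter := by
  refine antitone_nat_of_succ_le fun n => ?_
  induction n with
  | zero =>
    refine closure_minimal ?_ isClosed_Icc
    rintro _ ⟨x, hx, rfl⟩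
    exact P.mapsTo hx.1
  | succ n ih => exact closure_mono (image_mono (sdiff_subset_sdiff_left ih))

theorem LambdaIter_subset_biUnion_atomOf (n : ℕ) :
    P.LambdaIter n ⊆ ⋃ w ∈ P.admissible n, P.atomOf w := by
  induction n with
  | zero => exact fun x hx => mem_biUnion (x := []) ⟨rfl, x, hx⟩ hx
  | succ n ih =>
    refine closure_minimal ?_ ((P.admissible_finite _).isClosed_biUnion
      fun w _ => P.isClosed_atomOf w)
    rintro _ ⟨x, ⟨hxn, hxΔ⟩, rfl⟩
    obtain ⟨w, hw, hxw⟩ := mem_iUnion₂.1 (ih hxn)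
    obtain ⟨i, hi⟩ := mem_iUnion.1 (not_not.1 fun h => hxΔ ⟨P.atomOf_subset_X w hxw, h⟩)
    have hfx : P.f x ∈ P.atomOf (w ++ [i]) :=
      P.atomOf_append_singleton w i ▸ subset_closure ⟨x, ⟨hxw, hi⟩, rfl⟩
    exact mem_biUnion ⟨by simp [hw.1], _, hfx⟩ hfx

theorem coveringNumber_Lambda_le (hsep : P.SeparationProperty) (n : ℕ) :
    coveringNumber P.Lambda (P.lam ^ n * (P.b - P.a)) ≤ 1 + n * (P.Delta.ncard * P.N) := by
  refine (coveringNumber_le_ncard (P.admissible_finite n) P.atomOf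
    (fun w hw => ⟨P.ordConnected_atomOf w, hw.1 ▸ P.diam_atomOf_le w⟩) ?_).trans
    (P.ncard_admissible_le hsep n)
  exact (iInter_subset _ n).trans ((P.LambdaIter_antitone n.le_succ).trans
    (P.LambdaIter_subset_biUnion_atomOf n))

end PCIM

theorem lowerBoxDim_attractor_eq_zero_general (P : PCIM)
    (hsep : P.SeparationProperty) :
    Filter.liminf
      (fun ε : ℝ => Real.log (coveringNumber P.Lambda ε) / Real.log (1 / ε))
      (𝓝[>] (0 : ℝ)) = 0 := by
  refine liminf_log_div_log_inv_eq_zero P.hlam₀ P.hlam₁ (sub_pos.2 P.hab)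
    (K := P.Delta.ncard * P.N + 1) (le_add_of_nonneg_left (by positivity)) fun n => ?_
  calc (coveringNumber P.Lambda (P.lam ^ n * (P.b - P.a)) : ℝ)
      ≤ 1 + n * (P.Delta.ncard * P.N) := by exact_mod_cast P.coveringNumber_Lambda_le hsep n
    _ ≤ (P.Delta.ncard * P.N + 1) * (n + 1) := by nlinarith [(n.cast_nonneg : (0 : ℝ) ≤ n)]

/-- Under the separation property and `D ⊆ X̃`, the lower box
dimension of the attractor `Λ` is zero:
`liminf_{ε→0⁺} log ℓ(Λ,ε) / log (1/ε) = 0`. -/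
theorem lowerBoxDim_attractor_eq_zero (P : PCIM)
    (hsep : P.SeparationProperty) (hD : P.D ⊆ P.Xtilde) :
    Filter.liminf
      (fun ε : ℝ => Real.log (coveringNumber P.Lambda ε) / Real.log (1 / ε))
      (𝓝[>] (0 : ℝ)) = 0 :=
  lowerBoxDim_attractor_eq_zero_general P hsep
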